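/- arXiv:1901.07687 — 7 statements merged into one kernel-verified Lean document; each statement's English description precedes it below -/
import Mathlib

section
/- Suppose 0 ≤ L ≤ L̃ and 0 < R ≤ R̃. Let β = 1/(1 + √(2R̃/L̃)) (i.e., β = g(L̃/R̃) with g(z) = 1/(1 + √(2/z))). Then (−L·ln β + R)/(1 − β) ≤ L + √(2·L̃·R̃) + R. -/
/-!
Write `β = 1 / (1 + s)` with `s = √(2 R̃ / L̃)`. The elementary bound `-ln β ≤ (β⁻¹ - β) / 2`
(which is `u ≤ sinh u` at `u = -ln β`) turns the left-hand side into at most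
`L + R + (L s / 2 + R / s)`, and `s` is exactly the value balancing the two terms of
`L̃ s / 2 + R̃ / s`, each of which then equals `√(2 L̃ R̃) / 2`.
-/

open Real

theorem Real.log_le_sub_inv_div_two {x : ℝ} (hx : 1 ≤ x) : log x ≤ (x - x⁻¹) / 2 := by
  rw [← sinh_log (by linarith)]
  exact self_le_sinh_iff.mpr (log_nonneg hx)

theorem neg_mul_log_add_div_one_sub_le {L R β : ℝ} (hL : 0 ≤ L) (hβ0 : 0 < β) (hβ1 : β < 1) :
    (-L * log β + R) / (1 - β) ≤ L * (1 + β) / (2 * β) + R / (1 - β) := by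
  have hlog : -log β ≤ (β⁻¹ - β) / 2 := by
    rw [← log_inv]
    have := log_le_sub_inv_div_two (one_le_inv₀ hβ0 |>.mpr hβ1.le)
    rwa [inv_inv] at this
  have h1β : 0 < 1 - β := by linarith
  calc (-L * log β + R) / (1 - β)
      ≤ (L * ((β⁻¹ - β) / 2) + R) / (1 - β) := by
        gcongr ?_ / _
        nlinarith
    _ = L * (1 + β) / (2 * β) + R / (1 - β) := by
        field_simp
        ring

theorem mul_sqrt_div_two_add_div_sqrt_le {L Lt R Rt : ℝ} (hLLt : L ≤ Lt) (hRRt : R ≤ Rt)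
    (hLt : 0 < Lt) (hRt : 0 < Rt) :
    L * √(2 * Rt / Lt) / 2 + R / √(2 * Rt / Lt) ≤ √(2 * Lt * Rt) := by
  set K := √(2 * Lt * Rt)
  have hK : 0 < K := sqrt_pos.mpr (by positivity)
  have hK2 : K ^ 2 = 2 * Lt * Rt := sq_sqrt (by positivity)
  have hs : √(2 * Rt / Lt) = K / Lt := by
    rw [sqrt_eq_iff_mul_self_eq_of_pos (by positivity), div_mul_div_comm, ← sq, hK2]
    field_simp
  rw [hs]
  have hL_term : L * (K / Lt) / 2 ≤ K / 2 := by
    rw [div_le_div_iff_of_pos_right two_pos, mul_div_assoc', div_le_iff₀ hLt]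
    nlinarith
  have hR_term : R / (K / Lt) ≤ K / 2 := by
    rw [div_div_eq_mul_div, div_le_iff₀ hK]
    nlinarith
  linarith

theorem stmt_3 (L Lt R Rt β : ℝ)
    (hL0 : 0 ≤ L) (hLLt : L ≤ Lt) (hR0 : 0 < R) (hRRt : R ≤ Rt)
    (hβ : β = 1 / (1 + Real.sqrt (2 * Rt / Lt))) :
    (-L * Real.log β + R) / (1 - β) ≤ L + Real.sqrt (2 * Lt * Rt) + R := by
  rcases (hL0.trans hLLt).eq_or_lt with hLt | hLt
  · -- `L̃ = 0` forces `β = 1`, and the left-hand side is a division by zero.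
    have hL : L = 0 := le_antisymm (hLLt.trans hLt.ge) hL0
    subst hL hLt hβ
    simpa using hR0.le
  set s := √(2 * Rt / Lt)
  have hRt : 0 < Rt := hR0.trans_le hRRt
  have hs : 0 < s := sqrt_pos.mpr (by positivity)
  have hβ0 : 0 < β := by rw [hβ]; positivity
  have hβ1 : β < 1 := by rw [hβ, div_lt_one (by positivity : (0:ℝ) < 1 + s)]; linarith
  calc (-L * log β + R) / (1 - β)
      ≤ L * (1 + β) / (2 * β) + R / (1 - β) := neg_mul_log_add_div_one_sub_le hL0 hβ0 hβ1
    _ = L + R + (L * s / 2 + R / s) := by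
        rw [hβ]
        field_simp [hs.ne']
        ring
    _ ≤ L + √(2 * Lt * Rt) + R := by
        linarith [mul_sqrt_div_two_add_div_sqrt_le hLLt hRRt hLt hRt]
end

section
/- For any real symmetric n×n matrix A with 0 ⪯ A ⪯ I and any real numbers ρ₁, ρ₂: exp(A·ρ₁ + (I − A)·ρ₂) ⪯ A·exp(ρ₁) + (I − A)·exp(ρ₂), where the left side is the matrix exponential and the right side uses scalar exponentials. -/
/-!
Since `A` and `1 - A` commute, both sides are functions of `A` in the continuous functional
calculus: the left side is `x ↦ exp (ρ₁ x + ρ₂ (1 - x))` and the right side is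
`x ↦ x exp ρ₁ + (1 - x) exp ρ₂` applied to `A`. The spectrum of `A` lies in `[0, 1]`, where the
first function is bounded by the second by convexity of `exp`, and the functional calculus is
monotone.
-/

open Matrix

section ContinuousFunctionalCalculus

variable {A : Type*} [Ring A] [StarRing A] [TopologicalSpace A] [Algebra ℝ A]

theorem cfc_smul_add_smul_one_sub {p : A → Prop} [ContinuousFunctionalCalculus ℝ A p]
    (c₁ c₂ : ℝ) {a : A} (ha : p a) :
    cfc (fun x ↦ c₁ * x + c₂ * (1 - x)) a = c₁ • a + c₂ • (1 - a) := by
  rw [cfc_add a (fun x ↦ c₁ * x) (fun x ↦ c₂ * (1 - x)), cfc_const_mul_id c₁ a,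
    cfc_const_mul c₂ (fun x ↦ 1 - x) a, cfc_sub (fun _ : ℝ ↦ 1) (fun x : ℝ ↦ x) a,
    cfc_const_one ℝ a, cfc_id' ℝ a]

theorem ConvexOn.cfc_smul_add_smul_one_sub_le [T2Space A]
    [ContinuousFunctionalCalculus ℝ A IsSelfAdjoint] [PartialOrder A] [StarOrderedRing A]
    [NonnegSpectrumClass ℝ A] {f : ℝ → ℝ} (hf : ConvexOn ℝ Set.univ f)
    {a : A} (ha₀ : 0 ≤ a) (ha₁ : a ≤ 1) (ρ₁ ρ₂ : ℝ) :
    cfc f (ρ₁ • a + ρ₂ • (1 - a)) ≤ f ρ₁ • a + f ρ₂ • (1 - a) := by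
  have ha : IsSelfAdjoint a := .of_nonneg ha₀
  have hfc : Continuous f := continuousOn_univ.1 (hf.continuousOn isOpen_univ)
  rw [← cfc_smul_add_smul_one_sub _ _ ha, ← cfc_smul_add_smul_one_sub _ _ ha,
    ← cfc_comp' f _ a hfc.continuousOn]
  refine cfc_mono fun x hx ↦ ?_
  have hx₀ : 0 ≤ x := spectrum_nonneg_of_nonneg ha₀ hx
  have hx₁ : x ≤ 1 := (CFC.le_one_iff a).1 ha₁ x hx
  simpa [smul_eq_mul, mul_comm] using
    hf.2 (Set.mem_univ ρ₁) (Set.mem_univ ρ₂) hx₀ (sub_nonneg.2 hx₁) (add_sub_cancel x 1)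

end ContinuousFunctionalCalculus

theorem stmt_5_general (n : ℕ) (A : Matrix (Fin n) (Fin n) ℝ)
    (hA0 : A.PosSemidef) (hA1 : ((1 : Matrix (Fin n) (Fin n) ℝ) - A).PosSemidef)
    (ρ₁ ρ₂ : ℝ) :
    (Real.exp ρ₁ • A + Real.exp ρ₂ • ((1 : Matrix (Fin n) (Fin n) ℝ) - A)
      - NormedSpace.exp (ρ₁ • A + ρ₂ • ((1 : Matrix (Fin n) (Fin n) ℝ) - A))).PosSemidef := by
  -- The operator norm supplies the `NormedRing` structure under which `NormedSpace.exp = cfc exp`;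
  -- it induces the same topology as the one in the statement.
  open scoped MatrixOrder Matrix.Norms.L2Operator in
  rw [← nonneg_iff_posSemidef, sub_nonneg, ← CFC.real_exp_eq_normedSpace_exp]
  exact convexOn_exp.cfc_smul_add_smul_one_sub_le (nonneg_iff_posSemidef.2 hA0) hA1 ρ₁ ρ₂

theorem stmt_5 (n : ℕ) (A : Matrix (Fin n) (Fin n) ℝ)
    (hAs : A.IsSymm) (hA0 : A.PosSemidef) (hA1 : ((1 : Matrix (Fin n) (Fin n) ℝ) - A).PosSemidef)
    (ρ₁ ρ₂ : ℝ) :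
    (Real.exp ρ₁ • A + Real.exp ρ₂ • ((1 : Matrix (Fin n) (Fin n) ℝ) - A)
      - NormedSpace.exp (ρ₁ • A + ρ₂ • ((1 : Matrix (Fin n) (Fin n) ℝ) - A))).PosSemidef :=
  stmt_5_general n A hA0 hA1 ρ₁ ρ₂
end

section
/- Let w ∈ ℝⁿ be a probability vector (nonnegative entries summing to 1) and ℓ ∈ [0,1]ⁿ. Then for any η > 0, −ln(∑ⱼ wⱼ exp(−η ℓⱼ)) ≥ (wᵀℓ)(1 − exp(−η)). -/
theorem stmt_6 (n : ℕ) (w ℓ : Fin n → ℝ)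
    (hw0 : ∀ i, 0 ≤ w i) (hw1 : ∑ i, w i = 1)
    (hℓ : ∀ i, ℓ i ∈ Set.Icc (0 : ℝ) 1) (η : ℝ) (hη : 0 < η) :
    (∑ i, w i * ℓ i) * (1 - Real.exp (-η)) ≤
      -Real.log (∑ j, w j * Real.exp (-η * ℓ j)) := by
  set E := Real.exp (-η) with hE
  -- pointwise convexity bound: exp(-η ℓ i) ≤ 1 - (1 - E) * ℓ i
  have hstep : ∀ i, Real.exp (-η * ℓ i) ≤ 1 - (1 - E) * ℓ i := by
    intro i
    obtain ⟨h0, h1⟩ := hℓ i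
    have := convexOn_exp.2 (Set.mem_univ (0:ℝ)) (Set.mem_univ (-η))
      (by linarith : (0:ℝ) ≤ 1 - ℓ i) h0 (by ring)
    simp only [smul_eq_mul, mul_zero, zero_add, Real.exp_zero] at this
    calc Real.exp (-η * ℓ i) = Real.exp ((1 - ℓ i) * 0 + ℓ i * (-η)) := by ring_nf
      _ ≤ (1 - ℓ i) * 1 + ℓ i * E := by simpa using this
      _ = 1 - (1 - E) * ℓ i := by ring
  set S := ∑ j, w j * Real.exp (-η * ℓ j) with hS
  have hSle : S ≤ 1 - (1 - E) * ∑ i, w i * ℓ i := by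
    have : S ≤ ∑ i, w i * (1 - (1 - E) * ℓ i) :=
      Finset.sum_le_sum fun i _ => mul_le_mul_of_nonneg_left (hstep i) (hw0 i)
    calc S ≤ ∑ i, w i * (1 - (1 - E) * ℓ i) := this
      _ = (∑ i, w i) - (1 - E) * ∑ i, w i * ℓ i := by
          rw [Finset.mul_sum, ← Finset.sum_sub_distrib]
          apply Finset.sum_congr rfl
          intro i _
          ring
      _ = 1 - (1 - E) * ∑ i, w i * ℓ i := by rw [hw1]
  have hEpos : 0 < E := Real.exp_pos _
  have hSpos : 0 < S := by
    have : E = ∑ i, w i * E := by rw [← Finset.sum_mul, hw1, one_mul]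
    have hge : E ≤ S := by
      rw [this]
      apply Finset.sum_le_sum
      intro i _
      apply mul_le_mul_of_nonneg_left _ (hw0 i)
      apply Real.exp_le_exp.mpr
      have := (hℓ i).2
      nlinarith
    linarith
  have hlog : Real.log S ≤ Real.log (1 - (1 - E) * ∑ i, w i * ℓ i) :=
    Real.log_le_log hSpos hSle
  have hpos2 : 0 < 1 - (1 - E) * ∑ i, w i * ℓ i := lt_of_lt_of_le hSpos hSle
  have hlog2 : Real.log (1 - (1 - E) * ∑ i, w i * ℓ i) ≤ - (1 - E) * ∑ i, w i * ℓ i := by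
    have := Real.log_le_sub_one_of_pos hpos2
    linarith
  linarith
end

section
/- Let q, w be probability vectors in ℝⁿ with positive entries, ℓ ∈ [0,1]ⁿ, η > 0, and v the Hedge update vᵢ = wᵢ exp(−η ℓᵢ)/∑ⱼ wⱼ exp(−η ℓⱼ). Then d(q, w) − d(q, v) ≥ −η qᵀℓ + (wᵀℓ)(1 − exp(−η)). -/
theorem stmt_8 (n : ℕ) (q w ℓ v : Fin n → ℝ)
    (hq0 : ∀ i, 0 < q i) (hq1 : ∑ i, q i = 1)
    (hw0 : ∀ i, 0 < w i) (hw1 : ∑ i, w i = 1)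
    (hℓ : ∀ i, ℓ i ∈ Set.Icc (0 : ℝ) 1)
    (η : ℝ) (hη : 0 < η)
    (hv : ∀ i, v i = w i * Real.exp (-η * ℓ i) / ∑ j, w j * Real.exp (-η * ℓ j)) :
    (∑ i, q i * Real.log (q i / w i)) - (∑ i, q i * Real.log (q i / v i)) ≥
      -η * (∑ i, q i * ℓ i) + (∑ i, w i * ℓ i) * (1 - Real.exp (-η)) := by
  set Z : ℝ := ∑ j, w j * Real.exp (-η * ℓ j) with hZ
  have hn : n ≠ 0 := by intro h; subst h; simp at hq1
  have hZpos : 0 < Z :=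
    Finset.sum_pos (fun i _ => mul_pos (hw0 i) (Real.exp_pos _))
      ⟨⟨0, Nat.pos_of_ne_zero hn⟩, Finset.mem_univ _⟩
  have key : ∀ i, Real.exp (-η * ℓ i) ≤ 1 - ℓ i * (1 - Real.exp (-η)) := by
    intro i
    obtain ⟨h0, h1⟩ := hℓ i
    have := convexOn_exp.2 (Set.mem_univ (0:ℝ)) (Set.mem_univ (-η))
      (show (0:ℝ) ≤ 1 - ℓ i by linarith) h0 (by ring)
    simp only [smul_eq_mul, mul_zero, zero_add, Real.exp_zero, mul_one] at this
    calc Real.exp (-η * ℓ i) = Real.exp (ℓ i * (-η)) := by ring_nf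
      _ ≤ (1 - ℓ i) + ℓ i * Real.exp (-η) := this
      _ = 1 - ℓ i * (1 - Real.exp (-η)) := by ring
  have hZle : Z ≤ 1 - (∑ i, w i * ℓ i) * (1 - Real.exp (-η)) := by
    calc Z ≤ ∑ i, w i * (1 - ℓ i * (1 - Real.exp (-η))) :=
          Finset.sum_le_sum fun i _ => mul_le_mul_of_nonneg_left (key i) (hw0 i).le
      _ = (∑ i, w i) - (∑ i, w i * ℓ i) * (1 - Real.exp (-η)) := by
          rw [Finset.sum_mul, ← Finset.sum_sub_distrib]
          exact Finset.sum_congr rfl fun i _ => by ring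
      _ = 1 - (∑ i, w i * ℓ i) * (1 - Real.exp (-η)) := by rw [hw1]
  have hlogZ : Real.log Z ≤ Z - 1 := Real.log_le_sub_one_of_pos hZpos
  have hdiff : (∑ i, q i * Real.log (q i / w i)) - (∑ i, q i * Real.log (q i / v i))
      = -η * (∑ i, q i * ℓ i) - Real.log Z := by
    rw [← Finset.sum_sub_distrib]
    have step : ∀ i, q i * Real.log (q i / w i) - q i * Real.log (q i / v i)
        = q i * (-η * ℓ i) - q i * Real.log Z := by
      intro i
      have hvi : v i = w i * Real.exp (-η * ℓ i) / Z := hv i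
      have hvpos : 0 < v i := hvi ▸ div_pos (mul_pos (hw0 i) (Real.exp_pos _)) hZpos
      have hlv : Real.log (v i) = Real.log (w i) + (-η * ℓ i) - Real.log Z := by
        rw [hvi, Real.log_div (mul_pos (hw0 i) (Real.exp_pos _)).ne' hZpos.ne',
          Real.log_mul (hw0 i).ne' (Real.exp_pos _).ne', Real.log_exp]
      rw [Real.log_div (hq0 i).ne' (hw0 i).ne', Real.log_div (hq0 i).ne' hvpos.ne', hlv]
      ring
    rw [Finset.sum_congr rfl fun i _ => step i, Finset.sum_sub_distrib, ← Finset.sum_mul,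
      hq1, one_mul]
    congr 1
    rw [Finset.mul_sum]
    exact Finset.sum_congr rfl fun i _ => by ring
  rw [hdiff]
  linarith
end

section
/- For any real symmetric n×n matrix C with 0 ⪯ C ⪯ I and any η ≥ 0: exp(−η C) ⪯ I − C·(1 − exp(−η)), where the left side is the matrix exponential and exp(−η) on the right is the scalar exponential. -/
/-! Convexity of `exp` gives `exp (t * s) ≤ 1 - t + t * exp s` for `t ∈ [0, 1]`. The spectrum of
`C` lies in `[0, 1]`, so applying this scalar inequality through the continuous functional calculus
of `C` yields the matrix inequality. -/

theorem Real.exp_mul_le_one_sub_add_mul_exp {t : ℝ} (ht0 : 0 ≤ t) (ht1 : t ≤ 1) (s : ℝ) :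
    Real.exp (t * s) ≤ 1 - t + t * Real.exp s := by
  simpa [smul_eq_mul, mul_comm] using convexOn_exp.2 (Set.mem_univ 0) (Set.mem_univ s)
    (sub_nonneg.2 ht1) ht0 (by ring)

section CFC

variable {A : Type*} [NormedRing A] [StarRing A] [NormedAlgebra ℝ A]
  [ContinuousFunctionalCalculus ℝ A IsSelfAdjoint] [PartialOrder A] [StarOrderedRing A]
  [NonnegSpectrumClass ℝ A]

theorem spectrum_subset_Icc_of_nonneg_of_le_one {a : A} (ha0 : 0 ≤ a) (ha1 : a ≤ 1) :
    spectrum ℝ a ⊆ Set.Icc 0 1 := by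
  have ha : IsSelfAdjoint a := .of_nonneg ha0
  intro x hx
  exact ⟨spectrum_nonneg_of_nonneg ha0 hx,
    (le_algebraMap_iff_spectrum_le (r := (1 : ℝ))).1 (by simpa using ha1) x hx⟩

theorem NormedSpace.exp_smul_le_one_sub_smul [StarModule ℝ A] {a : A} (ha0 : 0 ≤ a)
    (ha1 : a ≤ 1) (s : ℝ) : NormedSpace.exp (s • a) ≤ 1 - (1 - Real.exp s) • a := by
  have ha := IsSelfAdjoint.of_nonneg ha0
  rw [← CFC.real_exp_eq_normedSpace_exp ((IsSelfAdjoint.all s).smul ha),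
    ← cfc_comp_smul s Real.exp a]
  calc cfc (fun x => Real.exp (s • x)) a ≤ cfc (fun x => 1 - (1 - Real.exp s) * x) a := by
        refine cfc_mono fun x hx => ?_
        obtain ⟨hx0, hx1⟩ := spectrum_subset_Icc_of_nonneg_of_le_one ha0 ha1 hx
        rw [smul_eq_mul, mul_comm]
        linarith [Real.exp_mul_le_one_sub_add_mul_exp hx0 hx1 s]
    _ = 1 - (1 - Real.exp s) • a := by
        rw [cfc_sub .., cfc_const_one .., cfc_const_mul .., cfc_id' ..]

end CFC

section

-- `NormedSpace.exp` does not depend on the norm; the L2 operator norm is chosen because its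
-- instances agree with those of the matrix functional calculus.
open scoped MatrixOrder Matrix.Norms.L2Operator

theorem Matrix.PosSemidef.one_sub_smul_sub_exp_smul {n : Type*} [Fintype n] [DecidableEq n]
    {C : Matrix n n ℝ} (hC0 : C.PosSemidef) (hC1 : (1 - C).PosSemidef) (s : ℝ) :
    (1 - (1 - Real.exp s) • C - NormedSpace.exp (s • C)).PosSemidef := by
  rw [← Matrix.nonneg_iff_posSemidef, sub_nonneg]
  exact NormedSpace.exp_smul_le_one_sub_smul hC0.nonneg (sub_nonneg.1 hC1.nonneg) s

end

theorem stmt_12_general (n : ℕ) (C : Matrix (Fin n) (Fin n) ℝ)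
    (hC0 : C.PosSemidef)
    (hC1 : ((1 : Matrix (Fin n) (Fin n) ℝ) - C).PosSemidef)
    (η : ℝ) :
    ((1 : Matrix (Fin n) (Fin n) ℝ) - (1 - Real.exp (-η)) • C
      - NormedSpace.exp ((-η) • C)).PosSemidef :=
  hC0.one_sub_smul_sub_exp_smul hC1 (-η)

theorem stmt_12 (n : ℕ) (C : Matrix (Fin n) (Fin n) ℝ)
    (hCs : C.IsSymm) (hC0 : C.PosSemidef)
    (hC1 : ((1 : Matrix (Fin n) (Fin n) ℝ) - C).PosSemidef)
    (η : ℝ) (hη : 0 ≤ η) :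
    ((1 : Matrix (Fin n) (Fin n) ℝ) - (1 - Real.exp (-η)) • C
      - NormedSpace.exp ((-η) • C)).PosSemidef :=
  stmt_12_general n C hC0 hC1 η
end

section
/- Let Y and C be real symmetric n×n matrices with Y a positive definite density matrix (Y ≻ 0, Tr Y = 1) and 0 ⪯ C ⪯ I, and let η ≥ 0. Then η·Tr(Y·C) − η²/2 + ln(Tr(exp(ln Y − η C))) ≤ 0. -/
/-!
Golden–Thompson gives `Tr exp(L - ηC) ≤ Tr(Y exp(-ηC))`. As the spectrum of `C` lies in `[0, 1]`,
convexity of `t ↦ e^{-ηt}` gives `exp(-ηC) ⪯ 1 + (e^{-η} - 1) C`, so this trace is at most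
`1 + (e^{-η} - 1) Tr(YC)`. Then `ln x ≤ x - 1`, `e^{-η} ≤ 1 - η + η²/2` and `0 ≤ Tr(YC) ≤ 1` finish.

Golden–Thompson follows from the Lie product formula along `n = 2^k` and the trace inequality
`Tr((GH)^{2^k}) ≤ Tr(G^{2^k} H^{2^k})` for symmetric `G`, `H`. The latter is proved by
Cauchy–Schwarz for the trace form, in a simultaneous induction with
`Tr((Sᵀ)^{2^k} S^{2^k}) ≤ Tr((SᵀS)^{2^k})`.
-/

open Matrix NormedSpace Filter Topology

theorem Real.exp_mul_le_one_add_mul {x : ℝ} (hx0 : 0 ≤ x) (hx1 : x ≤ 1) (s : ℝ) :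
    Real.exp (s * x) ≤ 1 + (Real.exp s - 1) * x := by
  have h := convexOn_exp.2 (Set.mem_univ 0) (Set.mem_univ s) (sub_nonneg.2 hx1) hx0 (by ring)
  simp only [smul_eq_mul, mul_zero, zero_add, Real.exp_zero, mul_one] at h
  rw [mul_comm] at h
  linarith

-- `(1 - x + x²/2) (1 + x + x²/2) = 1 + x⁴/4 ≥ 1` and `1 + x + x²/2 ≤ eˣ`.
theorem Real.exp_neg_le_one_sub_add_sq_div_two {x : ℝ} (hx : 0 ≤ x) :
    Real.exp (-x) ≤ 1 - x + x ^ 2 / 2 := by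
  have hq : 0 ≤ 1 - x + x ^ 2 / 2 := by nlinarith [sq_nonneg (x - 1)]
  rw [Real.exp_neg, inv_le_iff_one_le_mul₀' (Real.exp_pos x)]
  nlinarith [mul_le_mul_of_nonneg_right (Real.quadratic_le_exp_of_nonneg hx) hq, sq_nonneg (x ^ 2)]

section LieProduct

variable {𝔸 : Type*} [NormedRing 𝔸] [NormOneClass 𝔸] [NormedAlgebra ℝ 𝔸]

theorem NormedSpace.norm_exp_le_exp_norm (x : 𝔸) : ‖exp x‖ ≤ Real.exp ‖x‖ := by
  rw [exp_eq_tsum ℝ, Real.exp_eq_exp_ℝ, exp_eq_tsum_div]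
  refine (norm_tsum_le_tsum_norm (norm_expSeries_summable' x)).trans <|
    (norm_expSeries_summable' x).tsum_le_tsum (fun n => ?_) (Real.summable_pow_div_factorial _)
  rw [norm_smul, norm_inv, RCLike.norm_natCast, div_eq_inv_mul]
  exact mul_le_mul_of_nonneg_left (norm_pow_le x n) (by positivity)

omit [NormedAlgebra ℝ 𝔸] in
theorem norm_pow_sub_pow_le {E F : 𝔸} {c : ℝ} (hE : ‖E‖ ≤ c) (hF : ‖F‖ ≤ c) (n : ℕ) :
    ‖E ^ n - F ^ n‖ ≤ n * c ^ (n - 1) * ‖E - F‖ := by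
  induction n with
  | zero => simp
  | succ n ih =>
    have hc : 0 ≤ c := (norm_nonneg E).trans hE
    have hsplit : E ^ (n + 1) - F ^ (n + 1) = E ^ n * (E - F) + (E ^ n - F ^ n) * F := by
      noncomm_ring
    have hEn : ‖E ^ n‖ ≤ c ^ n := (norm_pow_le E n).trans (pow_le_pow_left₀ (norm_nonneg E) hE n)
    have hcn : (n : ℝ) * c ^ (n - 1) * c = n * c ^ n := by
      cases n with
      | zero => simp
      | succ n => simp [pow_succ, mul_assoc]
    calc ‖E ^ (n + 1) - F ^ (n + 1)‖
        ≤ ‖E ^ n‖ * ‖E - F‖ + ‖E ^ n - F ^ n‖ * ‖F‖ := by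
          rw [hsplit]
          exact (norm_add_le _ _).trans (add_le_add (norm_mul_le _ _) (norm_mul_le _ _))
      _ ≤ c ^ n * ‖E - F‖ + n * c ^ (n - 1) * ‖E - F‖ * c := by gcongr
      _ = (n + 1 : ℕ) * c ^ (n + 1 - 1) * ‖E - F‖ := by
          rw [mul_right_comm _ ‖E - F‖, hcn]; push_cast; ring

variable [CompleteSpace 𝔸]

omit [NormOneClass 𝔸] in
theorem NormedSpace.exp_inv_smul_pow (x : 𝔸) {n : ℕ} (hn : n ≠ 0) :
    exp ((n : ℝ)⁻¹ • x) ^ n = exp x := by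
  let : NormedAlgebra ℚ 𝔸 := NormedAlgebra.restrictScalars ℚ ℝ 𝔸
  rw [← exp_nsmul, ← Nat.cast_smul_eq_nsmul ℝ, smul_smul, mul_inv_cancel₀ (by exact_mod_cast hn),
    one_smul]

theorem NormedSpace.norm_exp_mul_exp_pow_sub_exp_add_le (a b : 𝔸) {n : ℕ} (hn : n ≠ 0) :
    ‖(exp ((n : ℝ)⁻¹ • a) * exp ((n : ℝ)⁻¹ • b)) ^ n - exp (a + b)‖ ≤ Real.exp (‖a‖ + ‖b‖) *
      ‖(n : ℝ) • (exp ((n : ℝ)⁻¹ • (a + b)) - exp ((n : ℝ)⁻¹ • a) * exp ((n : ℝ)⁻¹ • b))‖ := by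
  set x := (n : ℝ)⁻¹ • a
  set y := (n : ℝ)⁻¹ • b
  have hxy : ‖x‖ + ‖y‖ = (‖a‖ + ‖b‖) / n := by
    simp only [x, y, norm_smul, norm_inv, RCLike.norm_natCast]; field_simp
  have hE : ‖exp (x + y)‖ ≤ Real.exp (‖x‖ + ‖y‖) :=
    (norm_exp_le_exp_norm _).trans (Real.exp_le_exp.2 (norm_add_le _ _))
  have hF : ‖exp x * exp y‖ ≤ Real.exp (‖x‖ + ‖y‖) := by
    rw [Real.exp_add]
    exact (norm_mul_le _ _).trans (by gcongr <;> exact norm_exp_le_exp_norm _)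
  have hc : Real.exp (‖x‖ + ‖y‖) ^ (n - 1) ≤ Real.exp (‖a‖ + ‖b‖) := by
    calc Real.exp (‖x‖ + ‖y‖) ^ (n - 1) ≤ Real.exp (‖x‖ + ‖y‖) ^ n :=
          pow_le_pow_right₀ (Real.one_le_exp (by positivity)) (Nat.sub_le n 1)
      _ = Real.exp (‖a‖ + ‖b‖) := by rw [← Real.exp_nat_mul, hxy]; field_simp
  calc ‖(exp x * exp y) ^ n - exp (a + b)‖ = ‖exp (x + y) ^ n - (exp x * exp y) ^ n‖ := by
        rw [norm_sub_rev, ← smul_add, exp_inv_smul_pow _ hn]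
    _ ≤ n * Real.exp (‖x‖ + ‖y‖) ^ (n - 1) * ‖exp (x + y) - exp x * exp y‖ :=
        norm_pow_sub_pow_le hE hF n
    _ ≤ n * Real.exp (‖a‖ + ‖b‖) * ‖exp (x + y) - exp x * exp y‖ := by gcongr
    _ = Real.exp (‖a‖ + ‖b‖) * ‖(n : ℝ) • (exp ((n : ℝ)⁻¹ • (a + b)) - exp x * exp y)‖ := by
        rw [smul_add, norm_smul, RCLike.norm_natCast]; ring

-- The defect `g` vanishes at `0` with derivative `0`, so `n • g n⁻¹ → 0`.
theorem NormedSpace.tendsto_lie_product (a b : 𝔸) :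
    Tendsto (fun n : ℕ => (exp ((n : ℝ)⁻¹ • a) * exp ((n : ℝ)⁻¹ • b)) ^ n) atTop
      (𝓝 (exp (a + b))) := by
  set g : ℝ → 𝔸 := fun t => exp (t • (a + b)) - exp (t • a) * exp (t • b)
  have hg : HasDerivAt g 0 0 :=
    ((hasDerivAt_exp_smul_const (a + b) (0 : ℝ)).fun_sub
      ((hasDerivAt_exp_smul_const a (0 : ℝ)).fun_mul
        (hasDerivAt_exp_smul_const b (0 : ℝ)))).congr_deriv (by simp)
  have hinv : Tendsto (fun n : ℕ => (n : ℝ)⁻¹) atTop (𝓝[≠] 0) :=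
    (tendsto_inv_atTop_nhdsGT_zero.comp tendsto_natCast_atTop_atTop).mono_right
      (nhdsGT_le_nhdsNE 0)
  have hsmall : Tendsto (fun n : ℕ => (n : ℝ) • g (n : ℝ)⁻¹) atTop (𝓝 0) := by
    simpa [g, Function.comp_def] using hg.tendsto_slope_zero.comp hinv
  rw [tendsto_iff_norm_sub_tendsto_zero]
  refine squeeze_zero' (.of_forall fun _ => norm_nonneg _) ?_
    (by simpa using hsmall.norm.const_mul (Real.exp (‖a‖ + ‖b‖)))
  filter_upwards [eventually_ne_atTop 0] with n hn
  exact norm_exp_mul_exp_pow_sub_exp_add_le a b hn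

end LieProduct

section Comparison

variable {A : Type*} [NormedRing A] [StarRing A] [NormedAlgebra ℝ A] [StarModule ℝ A]
  [PartialOrder A] [StarOrderedRing A] [ContinuousFunctionalCalculus ℝ A IsSelfAdjoint]
  [NonnegSpectrumClass ℝ A]

theorem NormedSpace.exp_smul_le_one_add_smul {c : A} (hc0 : 0 ≤ c) (hc1 : c ≤ 1) (s : ℝ) :
    exp (s • c) ≤ 1 + (Real.exp s - 1) • c := by
  have hc : IsSelfAdjoint c := .of_nonneg hc0
  have hspec : ∀ x ∈ spectrum ℝ c, 0 ≤ x ∧ x ≤ 1 := fun x hx =>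
    ⟨spectrum_nonneg_of_nonneg hc0 hx,
      (le_algebraMap_iff_spectrum_le (r := (1 : ℝ))).1 (by simpa using hc1) x hx⟩
  have hexp : exp (s • c) = cfc (fun x => Real.exp (s * x)) c := by
    rw [← CFC.real_exp_eq_normedSpace_exp ((IsSelfAdjoint.all s).smul hc),
      ← cfc_comp_smul s Real.exp c]
    rfl
  have hlin : 1 + (Real.exp s - 1) • c = cfc (fun x => 1 + (Real.exp s - 1) * x) c := by
    rw [cfc_add .., cfc_const (1 : ℝ) c, map_one, cfc_const_mul .., cfc_id' ..]
  rw [hexp, hlin]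
  exact cfc_mono fun x hx => Real.exp_mul_le_one_add_mul (hspec x hx).1 (hspec x hx).2 s

end Comparison

namespace Matrix

variable {m n : Type*} [Fintype m] [Fintype n]

theorem trace_mul_le_sqrt_mul_sqrt (M : Matrix m n ℝ) (N : Matrix n m ℝ) :
    (M * N).trace ≤ √(M * Mᵀ).trace * √(Nᵀ * N).trace := by
  calc (M * N).trace = vec Mᵀ ⬝ᵥ vec N := by rw [vec_dotProduct_vec, transpose_transpose]
    _ ≤ √(vec Mᵀ ⬝ᵥ vec Mᵀ) * √(vec N ⬝ᵥ vec N) := by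
        simpa only [dotProduct, sq] using
          Real.sum_mul_le_sqrt_mul_sqrt Finset.univ (vec Mᵀ) (vec N)
    _ = √(M * Mᵀ).trace * √(Nᵀ * N).trace := by
        rw [vec_dotProduct_vec, vec_dotProduct_vec, transpose_transpose]

theorem trace_transpose_mul_self_nonneg (M : Matrix m n ℝ) : 0 ≤ (Mᵀ * M).trace := by
  simpa using (posSemidef_conjTranspose_mul_self M).trace_nonneg

open scoped MatrixOrder ComplexOrder in
theorem PosSemidef.trace_mul_nonneg {𝕜 : Type*} [RCLike 𝕜] {A B : Matrix m m 𝕜}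
    (hA : A.PosSemidef) (hB : B.PosSemidef) : 0 ≤ (A * B).trace := by
  classical
  obtain ⟨X, rfl⟩ := CStarAlgebra.nonneg_iff_eq_star_mul_self.mp hB.nonneg
  rw [star_eq_conjTranspose, ← mul_assoc, trace_mul_cycle]
  exact (hA.mul_mul_conjTranspose_same X).trace_nonneg

variable [DecidableEq m]

theorem trace_mul_pow_comm {R : Type*} [CommSemiring R] (A B : Matrix m m R) (k : ℕ) :
    ((A * B) ^ k).trace = ((B * A) ^ k).trace := by
  cases k with
  | zero => rfl
  | succ k =>
    rw [pow_succ, ← mul_assoc, mul_pow_mul, mul_assoc, trace_mul_comm, pow_succ, mul_assoc]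

theorem IsSymm.trace_pow_two_mul_nonneg {X : Matrix m m ℝ} (hX : X.IsSymm) (k : ℕ) :
    0 ≤ (X ^ (2 * k)).trace := by
  have h := trace_transpose_mul_self_nonneg (X ^ k)
  rwa [(hX.pow k).eq, ← pow_add, ← two_mul] at h

theorem trace_transpose_pow_mul_pow_two_mul_le {N : ℕ}
    (hC : ∀ S : Matrix m m ℝ, (Sᵀ ^ N * S ^ N).trace ≤ ((Sᵀ * S) ^ N).trace)
    (hD : ∀ G H : Matrix m m ℝ, G.IsSymm → H.IsSymm →
      ((G * H) ^ N).trace ≤ (G ^ N * H ^ N).trace)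
    (S : Matrix m m ℝ) : (Sᵀ ^ (2 * N) * S ^ (2 * N)).trace ≤ ((Sᵀ * S) ^ (2 * N)).trace := by
  set P := Sᵀ * S
  set Q := S * Sᵀ
  have hP : P.IsSymm := isSymm_transpose_mul_self S
  have hQ : Q.IsSymm := isSymm_mul_transpose_self S
  calc (Sᵀ ^ (2 * N) * S ^ (2 * N)).trace = ((S ^ 2)ᵀ ^ N * (S ^ 2) ^ N).trace := by
        rw [pow_mul, pow_mul, transpose_pow]
    _ ≤ (((S ^ 2)ᵀ * S ^ 2) ^ N).trace := hC (S ^ 2)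
    _ = ((P * Q) ^ N).trace := by
        rw [transpose_pow, sq, sq, show Sᵀ * Sᵀ * (S * S) = Sᵀ * P * S by simp only [P, mul_assoc],
          trace_mul_pow_comm, ← mul_assoc, trace_mul_pow_comm]
    _ ≤ (P ^ N * Q ^ N).trace := hD P Q hP hQ
    _ ≤ √(P ^ N * (P ^ N)ᵀ).trace * √((Q ^ N)ᵀ * Q ^ N).trace := trace_mul_le_sqrt_mul_sqrt _ _
    _ = (P ^ (2 * N)).trace := by
        rw [(hP.pow N).eq, (hQ.pow N).eq, ← pow_add, ← pow_add, ← two_mul,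
          show (Q ^ (2 * N)).trace = (P ^ (2 * N)).trace from trace_mul_pow_comm _ _ _,
          Real.mul_self_sqrt (hP.trace_pow_two_mul_nonneg N)]

theorem trace_mul_pow_two_mul_le {N : ℕ}
    (hC : ∀ S : Matrix m m ℝ, (Sᵀ ^ N * S ^ N).trace ≤ ((Sᵀ * S) ^ N).trace)
    (hD : ∀ G H : Matrix m m ℝ, G.IsSymm → H.IsSymm →
      ((G * H) ^ N).trace ≤ (G ^ N * H ^ N).trace)
    {G H : Matrix m m ℝ} (hG : G.IsSymm) (hH : H.IsSymm) :
    ((G * H) ^ (2 * N)).trace ≤ (G ^ (2 * N) * H ^ (2 * N)).trace := by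
  set W := (G * H) ^ N
  calc ((G * H) ^ (2 * N)).trace = (W * W).trace := by rw [two_mul, pow_add]
    _ ≤ √(W * Wᵀ).trace * √(Wᵀ * W).trace := trace_mul_le_sqrt_mul_sqrt W W
    _ = (Wᵀ * W).trace := by
        rw [trace_mul_comm W, Real.mul_self_sqrt (trace_transpose_mul_self_nonneg W)]
    _ = ((G * H)ᵀ ^ N * (G * H) ^ N).trace := by rw [transpose_pow]
    _ ≤ (((G * H)ᵀ * (G * H)) ^ N).trace := hC (G * H)
    _ = ((G ^ 2 * H ^ 2) ^ N).trace := by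
        rw [transpose_mul, hG.eq, hH.eq, show H * G * (G * H) = H * (G ^ 2 * H) by
          simp only [sq, mul_assoc], trace_mul_pow_comm, mul_assoc, ← sq]
    _ ≤ ((G ^ 2) ^ N * (H ^ 2) ^ N).trace := hD _ _ (hG.pow 2) (hH.pow 2)
    _ = (G ^ (2 * N) * H ^ (2 * N)).trace := by rw [pow_mul, pow_mul]

theorem trace_mul_pow_two_pow_le (k : ℕ) {G H : Matrix m m ℝ} (hG : G.IsSymm) (hH : H.IsSymm) :
    ((G * H) ^ 2 ^ k).trace ≤ (G ^ 2 ^ k * H ^ 2 ^ k).trace := by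
  suffices h : (∀ S : Matrix m m ℝ, (Sᵀ ^ 2 ^ k * S ^ 2 ^ k).trace ≤ ((Sᵀ * S) ^ 2 ^ k).trace) ∧
      ∀ G H : Matrix m m ℝ, G.IsSymm → H.IsSymm →
        ((G * H) ^ 2 ^ k).trace ≤ (G ^ 2 ^ k * H ^ 2 ^ k).trace from h.2 G H hG hH
  induction k with
  | zero => simp
  | succ k ih =>
    rw [pow_succ']
    exact ⟨trace_transpose_pow_mul_pow_two_mul_le ih.1 ih.2,
      fun G H hG hH => trace_mul_pow_two_mul_le ih.1 ih.2 hG hH⟩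

open scoped Norms.Operator in
theorem trace_exp_add_le_trace_exp_mul_exp {A B : Matrix m m ℝ} (hA : A.IsSymm)
    (hB : B.IsSymm) : (exp (A + B)).trace ≤ (exp A * exp B).trace := by
  rcases isEmpty_or_nonempty m with _ | _
  · simp [trace]
  have hlim := (tendsto_lie_product A B).comp
    (tendsto_pow_atTop_atTop_of_one_lt (one_lt_two (α := ℕ)))
  refine le_of_tendsto ((continuous_id.matrix_trace.tendsto _).comp hlim) (.of_forall fun k => ?_)
  have hk : 2 ^ k ≠ 0 := pow_ne_zero k two_ne_zero
  calc _ ≤ (exp (((2 ^ k : ℕ) : ℝ)⁻¹ • A) ^ 2 ^ k * exp (((2 ^ k : ℕ) : ℝ)⁻¹ • B) ^ 2 ^ k).trace :=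
        trace_mul_pow_two_pow_le k (hA.smul _).exp (hB.smul _).exp
    _ = (exp A * exp B).trace := by
        congr 2 <;> exact exp_inv_smul_pow _ hk

theorem IsSymm.posDef_exp {S : Matrix m m ℝ} (hS : S.IsSymm) : (NormedSpace.exp S).PosDef := by
  open scoped MatrixOrder Norms.L2Operator in
  exact (nonneg_iff_posSemidef.1 (IsSelfAdjoint.exp_nonneg (isHermitian_iff_isSymm.2 hS)))
    |>.posDef_iff_isUnit.2 (isUnit_exp S)

theorem PosSemidef.trace_mul_exp_smul_le {Y C : Matrix m m ℝ} (hY : Y.PosSemidef)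
    (hYt : Y.trace = 1) (hC0 : C.PosSemidef) (hC1 : (1 - C).PosSemidef) (s : ℝ) :
    (Y * exp (s • C)).trace ≤ 1 + (Real.exp s - 1) * (Y * C).trace := by
  have hle : (1 + (Real.exp s - 1) • C - exp (s • C)).PosSemidef := by
    open scoped MatrixOrder Norms.L2Operator in
    exact exp_smul_le_one_add_smul hC0.nonneg (le_iff.2 hC1) s
  have h := hY.trace_mul_nonneg hle
  rw [mul_sub, mul_add, mul_one, Matrix.mul_smul, trace_sub, trace_add, trace_smul, hYt,
    smul_eq_mul] at h
  linarith

end Matrix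

theorem stmt_14 (n : ℕ) (Y C L : Matrix (Fin n) (Fin n) ℝ)
    (hY : Y.PosDef) (hYt : Y.trace = 1)
    (hCs : C.IsSymm) (hC0 : C.PosSemidef)
    (hC1 : ((1 : Matrix (Fin n) (Fin n) ℝ) - C).PosSemidef)
    (η : ℝ) (hη : 0 ≤ η)
    (hLs : L.IsSymm) (hL : NormedSpace.exp L = Y) :
    η * (Y * C).trace - η ^ 2 / 2
      + Real.log ((NormedSpace.exp (L - η • C)).trace) ≤ 0 := by
  rcases n.eq_zero_or_pos with rfl | hn
  · simp at hYt
  have : Nonempty (Fin n) := Fin.pos_iff_nonempty.1 hn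
  set τ := (Y * C).trace
  have hτ0 : 0 ≤ τ := hY.posSemidef.trace_mul_nonneg hC0
  have hτ1 : τ ≤ 1 := by
    have h := hY.posSemidef.trace_mul_nonneg hC1
    rwa [mul_sub, mul_one, trace_sub, hYt, sub_nonneg] at h
  have hpos : 0 < (exp (L - η • C)).trace := (hLs.sub (hCs.smul η)).posDef_exp.trace_pos
  have hle : (exp (L - η • C)).trace ≤ 1 + (Real.exp (-η) - 1) * τ :=
    calc (exp (L - η • C)).trace = (exp (L + (-η) • C)).trace := by
          rw [neg_smul, ← sub_eq_add_neg]
      _ ≤ (Y * exp ((-η) • C)).trace := hL ▸ trace_exp_add_le_trace_exp_mul_exp hLs (hCs.smul _)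
      _ ≤ 1 + (Real.exp (-η) - 1) * τ := hY.posSemidef.trace_mul_exp_smul_le hYt hC0 hC1 (-η)
  have hlog : Real.log (exp (L - η • C)).trace ≤ (Real.exp (-η) - 1) * τ := by
    linarith [Real.log_le_sub_one_of_pos hpos]
  nlinarith [mul_nonneg hτ0 (sub_nonneg.2 (Real.exp_neg_le_one_sub_add_sq_div_two hη)),
    mul_nonneg (sub_nonneg.2 hτ1) (sq_nonneg η)]
end

section
/- Let W be a density matrix (symmetric positive semidefinite with Tr W = 1) whose eigenvalues are all at most 1/(n−k) for some 1 ≤ k < n. Then the eigenvalue vector w of W lies in the capped simplex B = {q ∈ ℝⁿ : qᵢ ≥ 0, ∑qᵢ = 1, qᵢ ≤ 1/(n−k)}, and conversely any q ∈ B can be written as a convex combination of at most n 'corner' vectors, each corner having exactly n−k nonzero entries all equal to 1/(n−k). -/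
/-!
The capped simplex `{q | 0 ≤ q ≤ 1/d, ∑ q = 1}` is compact and convex, so by Krein–Milman it is
the convex hull of its extreme points. An extreme point has no fractional entry `0 < q i < 1/d`:
two fractional entries allow a perturbation `q ± ε (eᵢ - eⱼ)` inside the set, and a single one is
impossible because the remaining entries contribute an integer multiple of `1/d` to the sum `1`.
Hence every extreme point is a corner. Carathéodory then writes `q` with affinely independent
corners, and since all of them lie on the hyperplane `∑ x = 1` there are at most `n` of them.
The eigenvalue part is `tr W = ∑ λᵢ` together with `λᵢ ≥ 0` for positive semidefinite `W`.
-/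

open Matrix Finset

def cappedSimplex (ι : Type*) [Fintype ι] (d : ℕ) : Set (ι → ℝ) :=
  {q | (∀ i, 0 ≤ q i) ∧ ∑ i, q i = 1 ∧ ∀ i, q i ≤ 1 / (d : ℝ)}

def cappedSimplexCorners (ι : Type*) [DecidableEq ι] (d : ℕ) : Set (ι → ℝ) :=
  {r | ∃ S : Finset ι, S.card = d ∧ ∀ i, r i = if i ∈ S then 1 / (d : ℝ) else 0}

theorem Finset.sum_eq_card_filter_nsmul_of_forall_eq_zero_or_eq {ι M : Type*} [AddCommMonoid M]
    [DecidableEq M] {q : ι → M} {c : M} (s : Finset ι) (h : ∀ j ∈ s, q j = 0 ∨ q j = c) :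
    ∑ j ∈ s, q j = #{j ∈ s | q j = c} • c := by
  rw [← sum_filter_add_sum_filter_not s (fun j => q j = c),
    sum_congr rfl fun j hj => (mem_filter.1 hj).2,
    sum_eq_zero fun j hj => (h j (mem_filter.1 hj).1).resolve_right (mem_filter.1 hj).2]
  simp

section CappedSimplex

variable {ι : Type*} [Fintype ι] {d : ℕ} {q : ι → ℝ}

theorem convex_cappedSimplex : Convex ℝ (cappedSimplex ι d) := by
  rintro x ⟨hx0, hx1, hxc⟩ y ⟨hy0, hy1, hyc⟩ a b ha hb hab
  refine ⟨fun i => ?_, ?_, fun i => ?_⟩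
  · simp only [Pi.add_apply, Pi.smul_apply, smul_eq_mul]
    have := hx0 i; have := hy0 i; positivity
  · simp only [Pi.add_apply, Pi.smul_apply, smul_eq_mul, sum_add_distrib, ← mul_sum, hx1, hy1, hab, mul_one]
  · simp only [Pi.add_apply, Pi.smul_apply, smul_eq_mul]
    calc a * x i + b * y i ≤ a * (1 / d) + b * (1 / d) := by gcongr <;> simp_all
      _ = 1 / d := by rw [← add_mul, hab, one_mul]

theorem isCompact_cappedSimplex : IsCompact (cappedSimplex ι d) := by
  have hclosed : IsClosed (cappedSimplex ι d) := by
    simp only [cappedSimplex, Set.ofPred_and, Set.ofPred_forall]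
    exact (isClosed_iInter fun i => isClosed_le continuous_const (continuous_apply i)).inter <|
      (isClosed_eq (continuous_finsetSum _ fun i _ => continuous_apply i) continuous_const).inter <|
        isClosed_iInter fun i => isClosed_le (continuous_apply i) continuous_const
  refine (isCompact_univ_pi fun _ => isCompact_Icc (a := 0) (b := 1 / (d : ℝ))).of_isClosed_subset
    hclosed fun q hq => Set.mem_univ_pi.2 fun i => ⟨hq.1 i, hq.2.2 i⟩

variable [DecidableEq ι]

theorem finite_cappedSimplexCorners : (cappedSimplexCorners ι d).Finite :=
  (Set.finite_range fun (S : Finset ι) (i : ι) => if i ∈ S then 1 / (d : ℝ) else 0).subset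
    fun _ ⟨S, _, hr⟩ => ⟨S, funext fun i => (hr i).symm⟩

theorem mem_cappedSimplexCorners_of_forall_eq_zero_or_eq (hq : q ∈ cappedSimplex ι d)
    (h : ∀ i, q i = 0 ∨ q i = 1 / (d : ℝ)) : q ∈ cappedSimplexCorners ι d := by
  have hsum := hq.2.1
  rw [sum_eq_card_filter_nsmul_of_forall_eq_zero_or_eq _ fun j _ => h j, nsmul_eq_mul] at hsum
  have hd : (d : ℝ) ≠ 0 := by rintro hd; simp [hd] at hsum
  refine ⟨univ.filter fun i => q i = 1 / (d : ℝ), ?_, fun i => ?_⟩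
  · rw [mul_one_div, div_eq_one_iff_eq hd] at hsum
    exact_mod_cast hsum
  · rcases h i with hi | hi <;> simp [hi]

theorem add_smul_single_sub_single_mem_cappedSimplex (hq : q ∈ cappedSimplex ι d) {i j : ι}
    (hij : i ≠ j) {t : ℝ} (hi : 0 ≤ q i + t ∧ q i + t ≤ 1 / (d : ℝ))
    (hj : 0 ≤ q j - t ∧ q j - t ≤ 1 / (d : ℝ)) :
    q + t • (Pi.single i 1 - Pi.single j 1) ∈ cappedSimplex ι d := by
  have hcoord : ∀ l, (q + t • (Pi.single i 1 - Pi.single j 1) : ι → ℝ) l =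
      if l = i then q i + t else if l = j then q j - t else q l := by
    intro l
    by_cases hli : l = i
    · subst hli; simp [hij]
    by_cases hlj : l = j
    · subst hlj; simp [hij.symm, sub_eq_add_neg]
    simp [hli, hlj]
  refine ⟨fun l => ?_, ?_, fun l => ?_⟩
  · rw [hcoord]; split_ifs; exacts [hi.1, hj.1, hq.1 l]
  · simp [sum_add_distrib, ← mul_sum, sum_sub_distrib, hq.2.1]
  · rw [hcoord]; split_ifs; exacts [hi.2, hj.2, hq.2.2 l]

theorem notMem_extremePoints_cappedSimplex_of_ne (hq : q ∈ cappedSimplex ι d) {i j : ι}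
    (hij : i ≠ j) (hi : q i ∈ Set.Ioo 0 (1 / (d : ℝ))) (hj : q j ∈ Set.Ioo 0 (1 / (d : ℝ))) :
    q ∉ (cappedSimplex ι d).extremePoints ℝ := by
  intro hext
  set ε := min (min (q i) (1 / d - q i)) (min (q j) (1 / d - q j))
  have hε : 0 < ε := by
    simp only [ε, lt_min_iff, sub_pos]
    exact ⟨⟨hi.1, hi.2⟩, hj.1, hj.2⟩
  have hεi : ε ≤ q i := (min_le_left _ _).trans (min_le_left _ _)
  have hεi' : ε ≤ 1 / d - q i := (min_le_left _ _).trans (min_le_right _ _)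
  have hεj : ε ≤ q j := (min_le_right _ _).trans (min_le_left _ _)
  have hεj' : ε ≤ 1 / d - q j := (min_le_right _ _).trans (min_le_right _ _)
  set v : ι → ℝ := Pi.single i 1 - Pi.single j 1
  have hplus : q + ε • v ∈ cappedSimplex ι d :=
    add_smul_single_sub_single_mem_cappedSimplex hq hij
      ⟨by linarith [hi.1], by linarith⟩ ⟨by linarith, by linarith [hj.2]⟩
  have hminus : q + (-ε) • v ∈ cappedSimplex ι d :=
    add_smul_single_sub_single_mem_cappedSimplex hq hij
      ⟨by linarith, by linarith [hi.2]⟩ ⟨by linarith [hj.1], by linarith⟩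
  have hseg : q ∈ openSegment ℝ (q + ε • v) (q + (-ε) • v) :=
    ⟨1 / 2, 1 / 2, by norm_num, by norm_num, by norm_num, by module⟩
  have hi_eq := congrFun (hext.2 hplus hminus hseg) i
  simp [v, hij] at hi_eq
  exact hε.ne' hi_eq

theorem exists_ne_mem_Ioo_of_mem_cappedSimplex (hq : q ∈ cappedSimplex ι d) {i : ι}
    (hi : q i ∈ Set.Ioo 0 (1 / (d : ℝ))) : ∃ j ≠ i, q j ∈ Set.Ioo 0 (1 / (d : ℝ)) := by
  by_contra! h
  have hd : (0 : ℝ) < d := one_div_pos.mp (hi.1.trans hi.2)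
  have hrest : ∀ j ∈ univ.erase i, q j = 0 ∨ q j = 1 / (d : ℝ) := fun j hj => by
    have := h j (ne_of_mem_erase hj)
    rw [Set.mem_Ioo, not_and_or, not_lt, not_lt] at this
    rcases this with h0 | hc
    · exact .inl (h0.antisymm (hq.1 j))
    · exact .inr ((hq.2.2 j).antisymm hc)
  have hsum := hq.2.1
  rw [← add_sum_erase _ _ (mem_univ i), sum_eq_card_filter_nsmul_of_forall_eq_zero_or_eq _ hrest,
    nsmul_eq_mul] at hsum
  set N := #{j ∈ univ.erase i | q j = 1 / (d : ℝ)}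
  -- `d * q i = d - N` would be an integer strictly between `0` and `1`.
  have hqd : q i * d + N = d := by
    field_simp at hsum
    linarith
  have hlo : 0 < q i * d := mul_pos hi.1 hd
  have hhi : q i * d < 1 := (lt_div_iff₀ hd).mp (by simpa using hi.2)
  have h1 : N < d := by exact_mod_cast (by linarith : (N : ℝ) < d)
  have h2 : d < N + 1 := by exact_mod_cast (by linarith : (d : ℝ) < N + 1)
  omega

theorem extremePoints_cappedSimplex_subset :
    (cappedSimplex ι d).extremePoints ℝ ⊆ cappedSimplexCorners ι d := by
  intro q hq
  refine mem_cappedSimplexCorners_of_forall_eq_zero_or_eq hq.1 fun i => ?_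
  by_contra! h
  have hi : q i ∈ Set.Ioo 0 (1 / (d : ℝ)) :=
    ⟨(hq.1.1 i).lt_of_ne' h.1, (hq.1.2.2 i).lt_of_ne h.2⟩
  obtain ⟨j, hji, hj⟩ := exists_ne_mem_Ioo_of_mem_cappedSimplex hq.1 hi
  exact notMem_extremePoints_cappedSimplex_of_ne hq.1 hji.symm hi hj hq

theorem convexHull_extremePoints_cappedSimplex :
    convexHull ℝ ((cappedSimplex ι d).extremePoints ℝ) = cappedSimplex ι d := by
  have hclosed : IsClosed (convexHull ℝ ((cappedSimplex ι d).extremePoints ℝ)) :=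
    (finite_cappedSimplexCorners.subset extremePoints_cappedSimplex_subset).isClosed_convexHull ℝ
  rw [← hclosed.closure_eq]
  exact closure_convexHull_extremePoints isCompact_cappedSimplex convex_cappedSimplex

end CappedSimplex

theorem AffineIndependent.linearIndependent_of_forall_apply_eq_one {k V ι : Type*} [Ring k]
    [AddCommGroup V] [Module k V] {p : ι → V} (hp : AffineIndependent k p) (f : V →ₗ[k] k)
    (hf : ∀ i, f (p i) = 1) : LinearIndependent k p :=
  linearIndependent_iff'.2 fun s g hg i hi =>
    hp.eq_zero_of_sum_eq_zero (by simpa [hf] using congrArg f hg) hg i hi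

theorem exists_fin_convexCombination_card_le {ι : Type*} [Fintype ι] {s : Set (ι → ℝ)}
    (hs : ∀ x ∈ s, ∑ i, x i = 1) {x : ι → ℝ} (hx : x ∈ convexHull ℝ s) :
    ∃ m ≤ Fintype.card ι, ∃ (p : Fin m → ℝ) (r : Fin m → ι → ℝ),
      (∀ j, 0 ≤ p j) ∧ ∑ j, p j = 1 ∧ (∀ j, r j ∈ s) ∧ x = ∑ j, p j • r j := by
  obtain ⟨κ, _, z, w, hzs, hz, hw0, hw1, hwz⟩ := eq_pos_convex_span_of_mem_convexHull hx
  -- On the hyperplane `∑ i, x i = 1`, which misses the origin, affine independence is linear.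
  have hlin : LinearIndependent ℝ z :=
    hz.linearIndependent_of_forall_apply_eq_one (∑ i, LinearMap.proj i) fun a => by
      simpa using hs _ (hzs ⟨a, rfl⟩)
  let e := Fintype.equivFin κ
  refine ⟨Fintype.card κ, ?_, w ∘ e.symm, z ∘ e.symm, fun j => (hw0 _).le, ?_,
    fun j => hzs ⟨_, rfl⟩, ?_⟩
  · simpa using hlin.fintype_card_le_finrank
  · exact (e.symm.sum_comp w).trans hw1
  · rw [← hwz]
    exact (e.symm.sum_comp fun a => w a • z a).symm

theorem stmt_18_general (n k : ℕ)
    (W : Matrix (Fin n) (Fin n) ℝ) (hW : W.IsHermitian)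
    (hpsd : W.PosSemidef) (htr : W.trace = 1)
    (heig : ∀ i, hW.eigenvalues i ≤ 1 / ((n - k : ℕ) : ℝ)) :
    ((∀ i, 0 ≤ hW.eigenvalues i) ∧ (∑ i, hW.eigenvalues i = 1) ∧
        ∀ i, hW.eigenvalues i ≤ 1 / ((n - k : ℕ) : ℝ)) ∧
      ∀ q : Fin n → ℝ,
        ((∀ i, 0 ≤ q i) ∧ (∑ i, q i = 1) ∧ ∀ i, q i ≤ 1 / ((n - k : ℕ) : ℝ)) →
        ∃ m : ℕ, m ≤ n ∧ ∃ (p : Fin m → ℝ) (r : Fin m → Fin n → ℝ),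
          (∀ j, 0 ≤ p j) ∧ (∑ j, p j = 1) ∧
          (∀ j, ∃ S : Finset (Fin n), S.card = n - k ∧
            ∀ i, r j i = if i ∈ S then 1 / ((n - k : ℕ) : ℝ) else 0) ∧
          q = ∑ j, p j • r j := by
  refine ⟨⟨hpsd.eigenvalues_nonneg, ?_, heig⟩, fun q hq => ?_⟩
  · simpa [htr] using hW.trace_eq_sum_eigenvalues.symm
  obtain ⟨m, hm, p, r, hp0, hp1, hr, hqr⟩ := exists_fin_convexCombination_card_le
    (fun r hr => hr.1.2.1) ((convexHull_extremePoints_cappedSimplex (d := n - k)).ge hq)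
  exact ⟨m, by simpa using hm, p, r, hp0, hp1,
    fun j => extremePoints_cappedSimplex_subset (hr j), hqr⟩

theorem stmt_18 (n k : ℕ) (hk1 : 1 ≤ k) (hkn : k < n)
    (W : Matrix (Fin n) (Fin n) ℝ) (hW : W.IsHermitian)
    (hpsd : W.PosSemidef) (htr : W.trace = 1)
    (heig : ∀ i, hW.eigenvalues i ≤ 1 / ((n - k : ℕ) : ℝ)) :
    ((∀ i, 0 ≤ hW.eigenvalues i) ∧ (∑ i, hW.eigenvalues i = 1) ∧
        ∀ i, hW.eigenvalues i ≤ 1 / ((n - k : ℕ) : ℝ)) ∧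
      ∀ q : Fin n → ℝ,
        ((∀ i, 0 ≤ q i) ∧ (∑ i, q i = 1) ∧ ∀ i, q i ≤ 1 / ((n - k : ℕ) : ℝ)) →
        ∃ m : ℕ, m ≤ n ∧ ∃ (p : Fin m → ℝ) (r : Fin m → Fin n → ℝ),
          (∀ j, 0 ≤ p j) ∧ (∑ j, p j = 1) ∧
          (∀ j, ∃ S : Finset (Fin n), S.card = n - k ∧
            ∀ i, r j i = if i ∈ S then 1 / ((n - k : ℕ) : ℝ) else 0) ∧
          q = ∑ j, p j • r j :=
  stmt_18_general n k W hW hpsd htr heig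
end
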